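/- (Uniqueness part of the fundamental theorem of surface theory.) Let U ⊆ ℝ² be a connected open set and r₁, r₂ : U → ℝ³ two smooth immersed parametrized surfaces whose first fundamental form coefficients E, F, G and second fundamental form coefficients L, M, N (computed with the normals n_i = (∂_u r_i × ∂_v r_i)/|∂_u r_i × ∂_v r_i|) agree at every point of U. Then r₂ is congruent to r₁: there exist A ∈ SO(3) and b ∈ ℝ³ with r₂(p) = A · r₁(p) + b for all p ∈ U. -/

import Mathlib

noncomputable section

/-- Euclidean dot product on `ℝ³`. -/
def dot3 (x y : Fin 3 → ℝ) : ℝ := ∑ i, x i * y i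

/-- Partial derivative with respect to the first coordinate `u`. -/
def pdu {E : Type*} [NormedAddCommGroup E] [NormedSpace ℝ E]
    (f : ℝ × ℝ → E) (p : ℝ × ℝ) : E := fderiv ℝ f p (1, 0)

/-- Partial derivative with respect to the second coordinate `v`. -/
def pdv {E : Type*} [NormedAddCommGroup E] [NormedSpace ℝ E]
    (f : ℝ × ℝ → E) (p : ℝ × ℝ) : E := fderiv ℝ f p (0, 1)

variable (r : ℝ × ℝ → Fin 3 → ℝ)

/-- Coefficient `E = ⟨r_u, r_u⟩` of the first fundamental form. -/
def Ec (p : ℝ × ℝ) : ℝ := dot3 (pdu r p) (pdu r p)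

/-- Coefficient `F = ⟨r_u, r_v⟩` of the first fundamental form. -/
def Fc (p : ℝ × ℝ) : ℝ := dot3 (pdu r p) (pdv r p)

/-- Coefficient `G = ⟨r_v, r_v⟩` of the first fundamental form. -/
def Gc (p : ℝ × ℝ) : ℝ := dot3 (pdv r p) (pdv r p)

/-- `W = √(EG − F²)`. -/
def Wc (p : ℝ × ℝ) : ℝ := Real.sqrt (Ec r p * Gc r p - Fc r p ^ 2)

/-- Unit normal `n = (r_u × r_v)/W`. -/
def nc (p : ℝ × ℝ) : Fin 3 → ℝ := (Wc r p)⁻¹ • (crossProduct (pdu r p) (pdv r p))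

/-- Coefficient `L = ⟨r_uu, n⟩` of the second fundamental form. -/
def Lc (p : ℝ × ℝ) : ℝ := dot3 (pdu (pdu r) p) (nc r p)

/-- Coefficient `M = ⟨r_uv, n⟩` of the second fundamental form. -/
def Mc (p : ℝ × ℝ) : ℝ := dot3 (pdv (pdu r) p) (nc r p)

/-- Coefficient `N = ⟨r_vv, n⟩` of the second fundamental form. -/
def Nc (p : ℝ × ℝ) : ℝ := dot3 (pdv (pdv r) p) (nc r p)

/-- Christoffel symbol `Γ¹₁₁`. -/
def Γ111 (p : ℝ × ℝ) : ℝ :=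
  (Gc r p * pdu (Ec r) p - 2 * Fc r p * pdu (Fc r) p + Fc r p * pdv (Ec r) p) /
    (2 * Wc r p ^ 2)

/-- Christoffel symbol `Γ²₁₁`. -/
def Γ211 (p : ℝ × ℝ) : ℝ :=
  (2 * Ec r p * pdu (Fc r) p - Ec r p * pdv (Ec r) p - Fc r p * pdu (Ec r) p) /
    (2 * Wc r p ^ 2)

/-- Christoffel symbol `Γ¹₁₂`. -/
def Γ112 (p : ℝ × ℝ) : ℝ :=
  (Gc r p * pdv (Ec r) p - Fc r p * pdu (Gc r) p) / (2 * Wc r p ^ 2)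

/-- Christoffel symbol `Γ²₁₂`. -/
def Γ212 (p : ℝ × ℝ) : ℝ :=
  (Ec r p * pdu (Gc r) p - Fc r p * pdv (Ec r) p) / (2 * Wc r p ^ 2)

/-- Christoffel symbol `Γ¹₂₂`. -/
def Γ122 (p : ℝ × ℝ) : ℝ :=
  (2 * Gc r p * pdv (Fc r) p - Gc r p * pdu (Gc r) p - Fc r p * pdv (Gc r) p) /
    (2 * Wc r p ^ 2)

/-- Christoffel symbol `Γ²₂₂`. -/
def Γ222 (p : ℝ × ℝ) : ℝ :=
  (Ec r p * pdv (Gc r) p - 2 * Fc r p * pdv (Fc r) p + Fc r p * pdu (Gc r) p) /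
    (2 * Wc r p ^ 2)

/-- `Δ = L/√(EG − F²)`. -/
def Δ0 (p : ℝ × ℝ) : ℝ := Lc r p / Wc r p

/-- `Δ' = M/√(EG − F²)`. -/
def Δ1 (p : ℝ × ℝ) : ℝ := Mc r p / Wc r p

/-- `Δ'' = N/√(EG − F²)`. -/
def Δ2 (p : ℝ × ℝ) : ℝ := Nc r p / Wc r p

/-! Attach to a surface the frame matrix `X` with rows `r_u, r_v, n`. Its Gram matrix `X Xᵀ` is
built from `E, F, G`, its determinant is `√(EG − F²)`, and the Koszul formula together with the
relations `⟨n, r_u⟩ = ⟨n, r_v⟩ = 0`, `⟨n, n⟩ = 1` shows that every `∂X · Xᵀ` is built from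
`E, F, G`, their first derivatives and `L, M, N`. Hence the frames of the two surfaces solve the
same linear equation `∂X = C X`, so `X₁⁻¹ X₂` has zero derivative and equals a constant `B` on the
connected set `U`; equal Gram matrices and determinants make `B` a rotation. Finally `r₂ − Bᵀ r₁`
has zero derivative, hence is a constant `b`. -/

open Filter Topology
open scoped Matrix

theorem map_eq_fst_smul_add_snd_smul {M F : Type*} [AddCommGroup M] [Module ℝ M]
    [FunLike F (ℝ × ℝ) M] [LinearMapClass F ℝ (ℝ × ℝ) M] (f : F) (a : ℝ × ℝ) :
    f a = a.1 • f (1, 0) + a.2 • f (0, 1) := by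
  conv_lhs => rw [show a = a.1 • ((1 : ℝ), (0 : ℝ)) + a.2 • ((0 : ℝ), (1 : ℝ)) by ext <;> simp]
  rw [map_add, map_smul, map_smul]

section Calculus

variable {E F : Type*} [NormedAddCommGroup E] [NormedSpace ℝ E]
  [NormedAddCommGroup F] [NormedSpace ℝ F] {r : E → F} {p : E}

theorem ContDiffAt.differentiableAt_fderiv_apply (hr : ContDiffAt ℝ 2 r p) (b : E) :
    DifferentiableAt ℝ (fun q => fderiv ℝ r q b) p :=
  ((hr.fderiv_right (m := 1) le_rfl).differentiableAt one_ne_zero).clm_apply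
    (differentiableAt_const b)

theorem ContDiffAt.fderiv_fderiv_apply (hr : ContDiffAt ℝ 2 r p) (a b : E) :
    fderiv ℝ (fun q => fderiv ℝ r q b) p a = fderiv ℝ (fderiv ℝ r) p a b := by
  have hd := (hr.fderiv_right (m := 1) le_rfl).differentiableAt one_ne_zero
  simp [fderiv_clm_apply hd (differentiableAt_const _)]

theorem ContDiffAt.fderiv_fderiv_apply_comm (hr : ContDiffAt ℝ 2 r p) (a b : E) :
    fderiv ℝ (fun q => fderiv ℝ r q b) p a = fderiv ℝ (fun q => fderiv ℝ r q a) p b := by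
  rw [hr.fderiv_fderiv_apply, hr.fderiv_fderiv_apply, hr.isSymmSndFDerivAt (by simp)]

variable {ι : Type*} [Fintype ι] {f g : E → ι → ℝ}

theorem DifferentiableAt.dotProduct (hf : DifferentiableAt ℝ f p) (hg : DifferentiableAt ℝ g p) :
    DifferentiableAt ℝ (fun q => f q ⬝ᵥ g q) p :=
  DifferentiableAt.fun_sum fun i _ =>
    (differentiableAt_pi.1 hf i).mul (differentiableAt_pi.1 hg i)

theorem fderiv_dotProduct_apply (hf : DifferentiableAt ℝ f p) (hg : DifferentiableAt ℝ g p)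
    (w : E) :
    fderiv ℝ (fun q => f q ⬝ᵥ g q) p w = fderiv ℝ f p w ⬝ᵥ g p + f p ⬝ᵥ fderiv ℝ g p w := by
  have hfi i : DifferentiableAt ℝ (fun q => f q i) p := differentiableAt_pi.1 hf i
  have hgi i : DifferentiableAt ℝ (fun q => g q i) p := differentiableAt_pi.1 hg i
  simp only [dotProduct]
  rw [fderiv_fun_sum (u := Finset.univ) (A := fun i q => f q i * g q i)
    fun i _ => (hfi i).mul (hgi i)]
  simp only [FunLike.coe_sum, Finset.sum_apply, fderiv_fun_mul (hfi _) (hgi _),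
    fderiv_apply hf, fderiv_apply hg, ← Finset.sum_add_distrib]
  refine Finset.sum_congr rfl fun i _ => ?_
  simp only [add_apply, smul_apply, ContinuousLinearMap.comp_apply,
    ContinuousLinearMap.proj_apply, smul_eq_mul]
  ring

theorem fderiv_dotProduct_eq_neg_of_eventuallyEq_const {c : ℝ} (hf : DifferentiableAt ℝ f p)
    (hg : DifferentiableAt ℝ g p) (hc : ∀ᶠ q in 𝓝 p, f q ⬝ᵥ g q = c) (w : E) :
    fderiv ℝ f p w ⬝ᵥ g p = -(f p ⬝ᵥ fderiv ℝ g p w) := by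
  have h := fderiv_dotProduct_apply hf hg w
  rw [EventuallyEq.fderiv_eq (f := fun _ => c) hc, fderiv_const_apply, zero_apply] at h
  linarith

theorem DifferentiableAt.crossProduct {f g : E → Fin 3 → ℝ} (hf : DifferentiableAt ℝ f p)
    (hg : DifferentiableAt ℝ g p) : DifferentiableAt ℝ (fun q => f q ⨯₃ g q) p := by
  have hfi := differentiableAt_pi.1 hf
  have hgi := differentiableAt_pi.1 hg
  simp only [cross_apply]
  exact ((hfi 1).mul (hgi 2) |>.sub ((hfi 2).mul (hgi 1))).finCons
    (((hfi 2).mul (hgi 0) |>.sub ((hfi 0).mul (hgi 2))).finCons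
      (((hfi 0).mul (hgi 1) |>.sub ((hfi 1).mul (hgi 0))).finCons (differentiableAt_const _)))

end Calculus

section FirstFundamentalForm

variable {E ι : Type*} [NormedAddCommGroup E] [NormedSpace ℝ E] [Fintype ι]

def firstFundamentalForm (r : E → ι → ℝ) (q a b : E) : ℝ :=
  fderiv ℝ r q a ⬝ᵥ fderiv ℝ r q b

variable {r r₁ r₂ : E → ι → ℝ} {p : E}

/-- The Koszul formula: the Christoffel symbols of the first kind are intrinsic. -/
theorem ContDiffAt.fderiv_fderiv_apply_dotProduct (hr : ContDiffAt ℝ 2 r p) (a b c : E) :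
    fderiv ℝ (fun q => fderiv ℝ r q b) p a ⬝ᵥ fderiv ℝ r p c =
      (fderiv ℝ (fun q => firstFundamentalForm r q b c) p a +
        fderiv ℝ (fun q => firstFundamentalForm r q a c) p b -
        fderiv ℝ (fun q => firstFundamentalForm r q a b) p c) / 2 := by
  have hd := hr.differentiableAt_fderiv_apply
  simp only [firstFundamentalForm, fderiv_dotProduct_apply (hd _) (hd _),
    hr.fderiv_fderiv_apply_comm _ a, hr.fderiv_fderiv_apply_comm c b]
  rw [dotProduct_comm (fderiv ℝ r p b),
    dotProduct_comm (fderiv ℝ r p a) (fderiv ℝ (fun q => fderiv ℝ r q c) p b)]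
  ring

theorem ContDiffAt.fderiv_fderiv_apply_dotProduct_eq (hr₁ : ContDiffAt ℝ 2 r₁ p)
    (hr₂ : ContDiffAt ℝ 2 r₂ p) (h : firstFundamentalForm r₁ =ᶠ[𝓝 p] firstFundamentalForm r₂)
    (a b c : E) :
    fderiv ℝ (fun q => fderiv ℝ r₁ q b) p a ⬝ᵥ fderiv ℝ r₁ p c =
      fderiv ℝ (fun q => fderiv ℝ r₂ q b) p a ⬝ᵥ fderiv ℝ r₂ p c := by
  have hI (x y : E) : (fun q => firstFundamentalForm r₁ q x y) =ᶠ[𝓝 p]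
      fun q => firstFundamentalForm r₂ q x y := h.mono fun q hq => congrFun (congrFun hq x) y
  rw [hr₁.fderiv_fderiv_apply_dotProduct, hr₂.fderiv_fderiv_apply_dotProduct,
    (hI b c).fderiv_eq, (hI a c).fderiv_eq, (hI a b).fderiv_eq]

end FirstFundamentalForm

section RingInverse

variable {E R : Type*} [NormedAddCommGroup E] [NormedSpace ℝ E] [NormedRing R]
  [NormedAlgebra ℝ R] [HasSummableGeomSeries R] {X : E → R} {p : E}

theorem fderiv_ringInverse_apply (hX : DifferentiableAt ℝ X p) (hu : IsUnit (X p)) (w : E) :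
    fderiv ℝ (fun q => Ring.inverse (X q)) p w =
      -(Ring.inverse (X p) * fderiv ℝ X p w * Ring.inverse (X p)) := by
  have h := (hasFDerivAt_ringInverse (𝕜 := ℝ) hu.unit).comp p hX.hasFDerivAt
  rw [← Ring.inverse_unit, hu.unit_spec, Function.comp_def] at h
  simp [h.fderiv]

theorem IsOpen.exists_eq_mul_of_fderiv_eq_mul {U : Set E} (hU : IsOpen U)
    (hU' : IsPreconnected U) {X₁ X₂ : E → R} (hX₁ : DifferentiableOn ℝ X₁ U)
    (hX₂ : DifferentiableOn ℝ X₂ U) (hu : ∀ p ∈ U, IsUnit (X₁ p))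
    (h : ∀ p ∈ U, ∀ w, fderiv ℝ X₂ p w = fderiv ℝ X₁ p w * Ring.inverse (X₁ p) * X₂ p) :
    ∃ B, ∀ p ∈ U, X₂ p = X₁ p * B := by
  obtain ⟨B, hB⟩ := hU.exists_is_const_of_fderiv_eq_zero
    (f := fun p => Ring.inverse (X₁ p) * X₂ p) hU' ((hX₁.inverse hu).fun_mul hX₂) fun p hp => by
      have hd₁ := hX₁.differentiableAt (hU.mem_nhds hp)
      ext1 w
      rw [fderiv_fun_mul' (hd₁.inverse (hu p hp)) (hX₂.differentiableAt (hU.mem_nhds hp))]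
      simp [fderiv_ringInverse_apply hd₁ (hu p hp), h p hp, mul_assoc]
  refine ⟨B, fun p hp => ?_⟩
  rw [← hB p hp, ← mul_assoc, Ring.mul_inverse_cancel _ (hu p hp), one_mul]

end RingInverse

theorem Matrix.inv_eq_transpose_mul_inv_mul_transpose {n : Type*} [Fintype n] [DecidableEq n]
    {X : Matrix n n ℝ} (hX : IsUnit X.det) : X⁻¹ = Xᵀ * (X * Xᵀ)⁻¹ := by
  refine Matrix.inv_eq_right_inv ?_
  rw [← Matrix.mul_assoc, Matrix.mul_nonsing_inv]
  simpa [Matrix.det_mul] using hX.mul hX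

section MatrixValued

-- Any submultiplicative norm would do: it is only needed to differentiate matrix inverses.
attribute [local instance] Matrix.linftyOpNormedRing Matrix.linftyOpNormedAlgebra

variable {E n : Type*} [NormedAddCommGroup E] [NormedSpace ℝ E] [Fintype n] [DecidableEq n]
  {X : E → Matrix n n ℝ} {p : E}

theorem Matrix.differentiableAt_iff_row :
    DifferentiableAt ℝ X p ↔ ∀ i, DifferentiableAt ℝ (fun q => X q i) p :=
  ((Matrix.ofLinearEquiv ℝ).toContinuousLinearEquiv.symm.comp_differentiableAt_iff
    (f := X)).symm.trans differentiableAt_pi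

theorem Matrix.fderiv_apply_row (hX : DifferentiableAt ℝ X p) (w : E) (i : n) :
    fderiv ℝ X p w i = fderiv ℝ (fun q => X q i) p w := by
  let e : (n → n → ℝ) ≃L[ℝ] Matrix n n ℝ := (Matrix.ofLinearEquiv ℝ).toContinuousLinearEquiv
  have h := fderiv_apply (e.symm.comp_differentiableAt_iff.2 hX) i
  rw [e.symm.comp_fderiv] at h
  exact (congrArg (fun L => L w) h).symm

theorem IsOpen.exists_mem_specialOrthogonalGroup_mul_eq {U : Set E} (hU : IsOpen U)
    (hU' : IsConnected U) {X₁ X₂ : E → Matrix n n ℝ}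
    (hX₁ : DifferentiableOn ℝ X₁ U) (hX₂ : DifferentiableOn ℝ X₂ U)
    (hdet₀ : ∀ p ∈ U, (X₁ p).det ≠ 0) (hdet : ∀ p ∈ U, (X₁ p).det = (X₂ p).det)
    (hgram : ∀ p ∈ U, X₁ p * (X₁ p)ᵀ = X₂ p * (X₂ p)ᵀ)
    (hconn : ∀ p ∈ U, ∀ w, fderiv ℝ X₁ p w * (X₁ p)ᵀ = fderiv ℝ X₂ p w * (X₂ p)ᵀ) :
    ∃ B ∈ Matrix.specialOrthogonalGroup n ℝ, ∀ p ∈ U, X₂ p = X₁ p * B := by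
  have hu₁ p (hp : p ∈ U) : IsUnit (X₁ p).det := (hdet₀ p hp).isUnit
  have hu₂ p (hp : p ∈ U) : IsUnit (X₂ p).det := hdet p hp ▸ (hdet₀ p hp).isUnit
  have hlog p (hp : p ∈ U) w : fderiv ℝ X₂ p w = fderiv ℝ X₁ p w * (X₁ p)⁻¹ * X₂ p := by
    rw [Matrix.inv_eq_transpose_mul_inv_mul_transpose (hu₁ p hp), ← Matrix.mul_assoc, hconn p hp,
      hgram p hp, Matrix.mul_assoc, Matrix.mul_assoc, ← Matrix.mul_assoc _ _ (X₂ p),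
      ← Matrix.inv_eq_transpose_mul_inv_mul_transpose (hu₂ p hp),
      Matrix.nonsing_inv_mul _ (hu₂ p hp), Matrix.mul_one]
  obtain ⟨B, hB⟩ := hU.exists_eq_mul_of_fderiv_eq_mul hU'.isPreconnected hX₁ hX₂
    (fun p hp => (Matrix.isUnit_iff_isUnit_det _).2 (hu₁ p hp)) fun p hp w => by
      rw [← Matrix.nonsing_inv_eq_ringInverse]
      exact hlog p hp w
  obtain ⟨p₀, hp₀⟩ := hU'.nonempty
  refine ⟨B, ?_, hB⟩
  rw [Matrix.mem_specialOrthogonalGroup_iff, Matrix.mem_orthogonalGroup_iff]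
  constructor
  · have hX := (Matrix.isUnit_iff_isUnit_det _).2 (hu₁ p₀ hp₀)
    have hXt := (Matrix.isUnit_iff_isUnit_det _).2 ((X₁ p₀).det_transpose ▸ hu₁ p₀ hp₀)
    have h := hgram p₀ hp₀
    rw [hB p₀ hp₀, Matrix.transpose_mul] at h
    refine hX.mul_left_cancel (hXt.mul_right_cancel ?_)
    simpa [Matrix.mul_assoc] using h.symm
  · have h := hdet p₀ hp₀
    rw [hB p₀ hp₀, Matrix.det_mul] at h
    exact (mul_eq_left₀ (hdet₀ p₀ hp₀)).1 h.symm

end MatrixValued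

section Surface

variable {r r₁ r₂ : ℝ × ℝ → Fin 3 → ℝ} {p : ℝ × ℝ}

theorem dot3_eq_dotProduct (x y : Fin 3 → ℝ) : dot3 x y = x ⬝ᵥ y := rfl

theorem firstFundamentalForm_eq (a b : ℝ × ℝ) :
    firstFundamentalForm r p a b =
      a.1 * b.1 * Ec r p + (a.1 * b.2 + a.2 * b.1) * Fc r p + a.2 * b.2 * Gc r p := by
  rw [firstFundamentalForm, map_eq_fst_smul_add_snd_smul (fderiv ℝ r p) a,
    map_eq_fst_smul_add_snd_smul (fderiv ℝ r p) b]
  simp only [Ec, Fc, Gc, pdu, pdv, dot3_eq_dotProduct, add_dotProduct, dotProduct_add,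
    smul_dotProduct, dotProduct_smul, smul_eq_mul, dotProduct_comm (fderiv ℝ r p (0, 1))]
  ring

theorem firstFundamentalForm_eq_of_coeffs_eq (hE : Ec r₁ p = Ec r₂ p) (hF : Fc r₁ p = Fc r₂ p)
    (hG : Gc r₁ p = Gc r₂ p) : firstFundamentalForm r₁ p = firstFundamentalForm r₂ p := by
  ext a b
  rw [firstFundamentalForm_eq, firstFundamentalForm_eq, hE, hF, hG]

theorem Ec_mul_Gc_sub_Fc_sq_eq_cross_dot_cross (p : ℝ × ℝ) :
    Ec r p * Gc r p - Fc r p ^ 2 = pdu r p ⨯₃ pdv r p ⬝ᵥ pdu r p ⨯₃ pdv r p := by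
  rw [cross_dot_cross, dotProduct_comm (pdv r p) (pdu r p)]
  simp only [Ec, Gc, Fc, dot3_eq_dotProduct]
  ring

section LinearIndependent

variable (hind : LinearIndependent ℝ ![pdu r p, pdv r p])
include hind

theorem Ec_mul_Gc_sub_Fc_sq_pos : 0 < Ec r p * Gc r p - Fc r p ^ 2 := by
  rw [Ec_mul_Gc_sub_Fc_sq_eq_cross_dot_cross]
  exact lt_of_le_of_ne (Finset.sum_nonneg fun i _ => mul_self_nonneg _)
    (Ne.symm (dotProduct_self_eq_zero.not.2 (crossProduct_ne_zero_iff_linearIndependent.2 hind)))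

theorem Wc_pos : 0 < Wc r p := Real.sqrt_pos.2 (Ec_mul_Gc_sub_Fc_sq_pos hind)

theorem Wc_sq : Wc r p ^ 2 = Ec r p * Gc r p - Fc r p ^ 2 :=
  Real.sq_sqrt (Ec_mul_Gc_sub_Fc_sq_pos hind).le

theorem nc_dotProduct_nc : nc r p ⬝ᵥ nc r p = 1 := by
  have h := (Wc_pos hind).ne'
  rw [nc, smul_dotProduct, dotProduct_smul, ← Ec_mul_Gc_sub_Fc_sq_eq_cross_dot_cross,
    ← Wc_sq hind, smul_eq_mul, smul_eq_mul]
  field_simp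

theorem differentiableAt_nc (hr : ContDiffAt ℝ 2 r p) : DifferentiableAt ℝ (nc r) p := by
  have hu : DifferentiableAt ℝ (pdu r) p := hr.differentiableAt_fderiv_apply _
  have hv : DifferentiableAt ℝ (pdv r) p := hr.differentiableAt_fderiv_apply _
  have hW : DifferentiableAt ℝ (Wc r) p :=
    (((hu.dotProduct hu).mul (hv.dotProduct hv)).sub ((hu.dotProduct hv).pow 2)).sqrt
      (Ec_mul_Gc_sub_Fc_sq_pos hind).ne'
  exact (hW.inv (Wc_pos hind).ne').smul (hu.crossProduct hv)

end LinearIndependent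

theorem nc_dotProduct_fderiv (p c : ℝ × ℝ) : nc r p ⬝ᵥ fderiv ℝ r p c = 0 := by
  have hu : fderiv ℝ r p (1, 0) ⬝ᵥ pdu r p ⨯₃ pdv r p = 0 := dot_self_cross _ _
  have hv : fderiv ℝ r p (0, 1) ⬝ᵥ pdu r p ⨯₃ pdv r p = 0 := dot_cross_self _ _
  rw [map_eq_fst_smul_add_snd_smul (fderiv ℝ r p) c, nc]
  simp only [dotProduct_add, dotProduct_smul, dotProduct_comm _ (fderiv ℝ r p _), hu, hv,
    smul_zero, add_zero]

theorem fderiv_nc_dotProduct_nc (hr : ContDiffAt ℝ 2 r p)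
    (hind : ∀ᶠ q in 𝓝 p, LinearIndependent ℝ ![pdu r q, pdv r q]) (w : ℝ × ℝ) :
    fderiv ℝ (nc r) p w ⬝ᵥ nc r p = 0 := by
  have hn := differentiableAt_nc hind.self_of_nhds hr
  have h := fderiv_dotProduct_eq_neg_of_eventuallyEq_const hn hn
    (hind.mono fun q hq => nc_dotProduct_nc hq) w
  rw [dotProduct_comm (nc r p)] at h
  linarith

def secondFundamentalForm (r : ℝ × ℝ → Fin 3 → ℝ) (q a b : ℝ × ℝ) : ℝ :=
  fderiv ℝ (fun x => fderiv ℝ r x b) q a ⬝ᵥ nc r q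

theorem secondFundamentalForm_eq (hr : ContDiffAt ℝ 2 r p) (a b : ℝ × ℝ) :
    secondFundamentalForm r p a b =
      a.1 * b.1 * Lc r p + (a.1 * b.2 + a.2 * b.1) * Mc r p + a.2 * b.2 * Nc r p := by
  have hL : Lc r p = fderiv ℝ (fderiv ℝ r) p (1, 0) (1, 0) ⬝ᵥ nc r p :=
    congrArg (· ⬝ᵥ nc r p) (hr.fderiv_fderiv_apply _ _)
  have hM : Mc r p = fderiv ℝ (fderiv ℝ r) p (0, 1) (1, 0) ⬝ᵥ nc r p :=
    congrArg (· ⬝ᵥ nc r p) (hr.fderiv_fderiv_apply _ _)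
  have hM' : Mc r p = fderiv ℝ (fderiv ℝ r) p (1, 0) (0, 1) ⬝ᵥ nc r p := by
    rw [hM, hr.isSymmSndFDerivAt (by simp)]
  have hN : Nc r p = fderiv ℝ (fderiv ℝ r) p (0, 1) (0, 1) ⬝ᵥ nc r p :=
    congrArg (· ⬝ᵥ nc r p) (hr.fderiv_fderiv_apply _ _)
  rw [secondFundamentalForm, hr.fderiv_fderiv_apply,
    map_eq_fst_smul_add_snd_smul (fderiv ℝ (fderiv ℝ r) p) a, add_apply, smul_apply, smul_apply,
    map_eq_fst_smul_add_snd_smul (fderiv ℝ (fderiv ℝ r) p (1, 0)) b,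
    map_eq_fst_smul_add_snd_smul (fderiv ℝ (fderiv ℝ r) p (0, 1)) b]
  simp only [add_dotProduct, smul_dotProduct, smul_eq_mul, hL, hM', hN]
  rw [← hM, hM']
  ring

theorem secondFundamentalForm_eq_of_coeffs_eq (hr₁ : ContDiffAt ℝ 2 r₁ p)
    (hr₂ : ContDiffAt ℝ 2 r₂ p) (hL : Lc r₁ p = Lc r₂ p) (hM : Mc r₁ p = Mc r₂ p)
    (hN : Nc r₁ p = Nc r₂ p) : secondFundamentalForm r₁ p = secondFundamentalForm r₂ p := by
  ext a b
  rw [secondFundamentalForm_eq hr₁, secondFundamentalForm_eq hr₂, hL, hM, hN]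

theorem fderiv_nc_dotProduct_fderiv (hr : ContDiffAt ℝ 2 r p)
    (hind : LinearIndependent ℝ ![pdu r p, pdv r p]) (w c : ℝ × ℝ) :
    fderiv ℝ (nc r) p w ⬝ᵥ fderiv ℝ r p c = -secondFundamentalForm r p w c := by
  rw [fderiv_dotProduct_eq_neg_of_eventuallyEq_const (differentiableAt_nc hind hr)
    (hr.differentiableAt_fderiv_apply c) (Eventually.of_forall fun q => nc_dotProduct_fderiv q c),
    secondFundamentalForm, dotProduct_comm]

end Surface

section Frame

attribute [local instance] Matrix.linftyOpNormedRing Matrix.linftyOpNormedAlgebra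

variable {r r₁ r₂ : ℝ × ℝ → Fin 3 → ℝ} {p : ℝ × ℝ}

def frame (r : ℝ × ℝ → Fin 3 → ℝ) (q : ℝ × ℝ) : Matrix (Fin 3) (Fin 3) ℝ :=
  Matrix.of ![pdu r q, pdv r q, nc r q]

@[simp] theorem frame_apply_zero (q : ℝ × ℝ) : frame r q 0 = pdu r q := rfl
@[simp] theorem frame_apply_one (q : ℝ × ℝ) : frame r q 1 = pdv r q := rfl
@[simp] theorem frame_apply_two (q : ℝ × ℝ) : frame r q 2 = nc r q := rfl

theorem frame_mul_transpose (hind : LinearIndependent ℝ ![pdu r p, pdv r p]) :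
    frame r p * (frame r p)ᵀ = !![Ec r p, Fc r p, 0; Fc r p, Gc r p, 0; 0, 0, 1] := by
  have hu : nc r p ⬝ᵥ pdu r p = 0 := nc_dotProduct_fderiv p _
  have hv : nc r p ⬝ᵥ pdv r p = 0 := nc_dotProduct_fderiv p _
  ext i j
  change frame r p i ⬝ᵥ frame r p j = _
  fin_cases i <;> fin_cases j <;>
    simp [Ec, Fc, Gc, dot3_eq_dotProduct, hu, hv, dotProduct_comm _ (nc r p),
      nc_dotProduct_nc hind, dotProduct_comm (pdv r p)]

theorem det_frame (hind : LinearIndependent ℝ ![pdu r p, pdv r p]) :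
    (frame r p).det = Wc r p := by
  have h := (Wc_pos hind).ne'
  change Matrix.det ![pdu r p, pdv r p, nc r p] = _
  rw [← triple_product_eq_det, triple_product_permutation, triple_product_permutation, nc,
    smul_dotProduct, ← Ec_mul_Gc_sub_Fc_sq_eq_cross_dot_cross, ← Wc_sq hind, smul_eq_mul]
  field_simp

theorem differentiableAt_frame (hr : ContDiffAt ℝ 2 r p)
    (hind : LinearIndependent ℝ ![pdu r p, pdv r p]) : DifferentiableAt ℝ (frame r) p := by
  refine Matrix.differentiableAt_iff_row.2 fun i => ?_
  fin_cases i
  exacts [hr.differentiableAt_fderiv_apply _, hr.differentiableAt_fderiv_apply _,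
    differentiableAt_nc hind hr]

theorem fderiv_frame_mul_transpose_eq (hr₁ : ContDiffAt ℝ 2 r₁ p) (hr₂ : ContDiffAt ℝ 2 r₂ p)
    (hind₁ : ∀ᶠ q in 𝓝 p, LinearIndependent ℝ ![pdu r₁ q, pdv r₁ q])
    (hind₂ : ∀ᶠ q in 𝓝 p, LinearIndependent ℝ ![pdu r₂ q, pdv r₂ q])
    (hI : firstFundamentalForm r₁ =ᶠ[𝓝 p] firstFundamentalForm r₂)
    (hII : secondFundamentalForm r₁ p = secondFundamentalForm r₂ p) (w : ℝ × ℝ) :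
    fderiv ℝ (frame r₁) p w * (frame r₁ p)ᵀ = fderiv ℝ (frame r₂) p w * (frame r₂ p)ᵀ := by
  have hTT := hr₁.fderiv_fderiv_apply_dotProduct_eq hr₂ hI w
  have hTN b : secondFundamentalForm r₁ p w b = secondFundamentalForm r₂ p w b := by rw [hII]
  have hNT c : fderiv ℝ (nc r₁) p w ⬝ᵥ fderiv ℝ r₁ p c =
      fderiv ℝ (nc r₂) p w ⬝ᵥ fderiv ℝ r₂ p c := by
    rw [fderiv_nc_dotProduct_fderiv hr₁ hind₁.self_of_nhds,
      fderiv_nc_dotProduct_fderiv hr₂ hind₂.self_of_nhds, hII]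
  have hNN : fderiv ℝ (nc r₁) p w ⬝ᵥ nc r₁ p = fderiv ℝ (nc r₂) p w ⬝ᵥ nc r₂ p := by
    rw [fderiv_nc_dotProduct_nc hr₁ hind₁, fderiv_nc_dotProduct_nc hr₂ hind₂]
  ext i j
  change fderiv ℝ (frame r₁) p w i ⬝ᵥ frame r₁ p j = fderiv ℝ (frame r₂) p w i ⬝ᵥ frame r₂ p j
  rw [Matrix.fderiv_apply_row (differentiableAt_frame hr₁ hind₁.self_of_nhds),
    Matrix.fderiv_apply_row (differentiableAt_frame hr₂ hind₂.self_of_nhds)]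
  fin_cases i <;> fin_cases j <;> first | exact hTT _ _ | exact hTN _ | exact hNT _ | exact hNN

theorem exists_mem_specialOrthogonalGroup_frame_eq_mul {U : Set (ℝ × ℝ)} (hU : IsOpen U)
    (hUconn : IsConnected U)
    (hr₁ : ContDiffOn ℝ (⊤ : ℕ∞) r₁ U) (hr₂ : ContDiffOn ℝ (⊤ : ℕ∞) r₂ U)
    (hind₁ : ∀ p ∈ U, LinearIndependent ℝ ![pdu r₁ p, pdv r₁ p])
    (hind₂ : ∀ p ∈ U, LinearIndependent ℝ ![pdu r₂ p, pdv r₂ p])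
    (hE : ∀ p ∈ U, Ec r₁ p = Ec r₂ p) (hF : ∀ p ∈ U, Fc r₁ p = Fc r₂ p)
    (hG : ∀ p ∈ U, Gc r₁ p = Gc r₂ p) (hL : ∀ p ∈ U, Lc r₁ p = Lc r₂ p)
    (hM : ∀ p ∈ U, Mc r₁ p = Mc r₂ p) (hN : ∀ p ∈ U, Nc r₁ p = Nc r₂ p) :
    ∃ B ∈ Matrix.specialOrthogonalGroup (Fin 3) ℝ, ∀ p ∈ U, frame r₂ p = frame r₁ p * B := by
  have hC₁ p (hp : p ∈ U) : ContDiffAt ℝ 2 r₁ p :=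
    (hr₁.contDiffAt (hU.mem_nhds hp)).of_le ENat.LEInfty.out
  have hC₂ p (hp : p ∈ U) : ContDiffAt ℝ 2 r₂ p :=
    (hr₂.contDiffAt (hU.mem_nhds hp)).of_le ENat.LEInfty.out
  refine hU.exists_mem_specialOrthogonalGroup_mul_eq hUconn
    (fun p hp => (differentiableAt_frame (hC₁ p hp) (hind₁ p hp)).differentiableWithinAt)
    (fun p hp => (differentiableAt_frame (hC₂ p hp) (hind₂ p hp)).differentiableWithinAt)
    (fun p hp => (det_frame (hind₁ p hp)).trans_ne (Wc_pos (hind₁ p hp)).ne')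
    (fun p hp => ?_) (fun p hp => ?_) fun p hp =>
      fderiv_frame_mul_transpose_eq (hC₁ p hp) (hC₂ p hp)
        (eventually_of_mem (hU.mem_nhds hp) hind₁) (eventually_of_mem (hU.mem_nhds hp) hind₂)
        (eventually_of_mem (hU.mem_nhds hp) fun q hq =>
          firstFundamentalForm_eq_of_coeffs_eq (hE q hq) (hF q hq) (hG q hq))
        (secondFundamentalForm_eq_of_coeffs_eq (hC₁ p hp) (hC₂ p hp) (hL p hp) (hM p hp) (hN p hp))
  · rw [det_frame (hind₁ p hp), det_frame (hind₂ p hp), Wc, Wc, hE p hp, hF p hp, hG p hp]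
  · rw [frame_mul_transpose (hind₁ p hp), frame_mul_transpose (hind₂ p hp), hE p hp, hF p hp,
      hG p hp]

theorem fderiv_eq_fderiv_mulVec_of_frame_eq_mul {B : Matrix (Fin 3) (Fin 3) ℝ}
    (hr₁ : DifferentiableAt ℝ r₁ p) (h : frame r₂ p = frame r₁ p * B) :
    fderiv ℝ r₂ p = fderiv ℝ (fun q => Bᵀ *ᵥ r₁ q) p := by
  let T := (Matrix.mulVecLin Bᵀ).toContinuousLinearMap
  have hu : pdu r₂ p = Bᵀ *ᵥ pdu r₁ p := by rw [Matrix.mulVec_transpose]; exact congrFun h 0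
  have hv : pdv r₂ p = Bᵀ *ᵥ pdv r₁ p := by rw [Matrix.mulVec_transpose]; exact congrFun h 1
  rw [show fderiv ℝ (fun q => Bᵀ *ᵥ r₁ q) p = T.comp (fderiv ℝ r₁ p) from
    (T.hasFDerivAt.comp p hr₁.hasFDerivAt).fderiv]
  refine ContinuousLinearMap.ext fun a => ?_
  rw [map_eq_fst_smul_add_snd_smul (fderiv ℝ r₂ p), map_eq_fst_smul_add_snd_smul (T.comp _)]
  exact congrArg₂ (fun x y => a.1 • x + a.2 • y) hu hv

end Frame

/-- uniqueness part of the fundamental theorem of surface theory: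
two smooth immersed parametrized surfaces on a connected open set `U ⊆ ℝ²` with the
same first and second fundamental form coefficients are congruent via a rotation
`A ∈ SO(3)` and a translation `b ∈ ℝ³`. -/
theorem fundamental_theorem_surfaces_uniqueness
    (U : Set (ℝ × ℝ)) (hU : IsOpen U) (hUconn : IsConnected U)
    (r₁ r₂ : ℝ × ℝ → Fin 3 → ℝ)
    (hr₁ : ContDiffOn ℝ (⊤ : ℕ∞) r₁ U) (hr₂ : ContDiffOn ℝ (⊤ : ℕ∞) r₂ U)
    (hind₁ : ∀ p ∈ U, LinearIndependent ℝ ![pdu r₁ p, pdv r₁ p])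
    (hind₂ : ∀ p ∈ U, LinearIndependent ℝ ![pdu r₂ p, pdv r₂ p])
    (hE : ∀ p ∈ U, Ec r₁ p = Ec r₂ p)
    (hF : ∀ p ∈ U, Fc r₁ p = Fc r₂ p)
    (hG : ∀ p ∈ U, Gc r₁ p = Gc r₂ p)
    (hL : ∀ p ∈ U, Lc r₁ p = Lc r₂ p)
    (hM : ∀ p ∈ U, Mc r₁ p = Mc r₂ p)
    (hN : ∀ p ∈ U, Nc r₁ p = Nc r₂ p) :
    ∃ A : Matrix (Fin 3) (Fin 3) ℝ,
      A ∈ Matrix.specialOrthogonalGroup (Fin 3) ℝ ∧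
        ∃ b : Fin 3 → ℝ, ∀ p ∈ U, r₂ p = A.mulVec (r₁ p) + b := by
  obtain ⟨B, hB, hframe⟩ := exists_mem_specialOrthogonalGroup_frame_eq_mul hU hUconn hr₁ hr₂
    hind₁ hind₂ hE hF hG hL hM hN
  have hd₁ : DifferentiableOn ℝ r₁ U := hr₁.differentiableOn (by simp)
  obtain ⟨b, hb⟩ := hU.exists_eq_add_of_fderiv_eq hUconn.isPreconnected
    (hr₂.differentiableOn (by simp))
    ((Matrix.mulVecLin Bᵀ).toContinuousLinearMap.differentiable.comp_differentiableOn hd₁)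
    fun p hp => fderiv_eq_fderiv_mulVec_of_frame_eq_mul (hd₁.differentiableAt (hU.mem_nhds hp))
      (hframe p hp)
  refine ⟨Bᵀ, ?_, b, fun p hp => hb hp⟩
  simpa [Matrix.star_eq_conjTranspose] using
    (star (⟨B, hB⟩ : Matrix.specialOrthogonalGroup (Fin 3) ℝ)).2
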